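/- Let Z_1 ≤ … ≤ Z_n be real numbers and u ∈ ℝ^n with all entries u_1,…,u_n distinct. Let ũ be the isotonic median projection with block representation given by breakpoints 1 = n_1 < … < n_m = n+1 and values r_1 < … < r_{m−1} (so ũ_i = r_t for n_t ≤ i < n_{t+1}). For each t ∈ [m−1], define P_t = {ℓ ∈ {n_t,…,n_{t+1}−1}: u_ℓ > r_t} with elements ordered ℓ⁺_{t,1} < … < ℓ⁺_{t,n_t⁺}, and N_t = {ℓ ∈ {n_t,…,n_{t+1}−1}: u_ℓ < r_t} with elements ordered ℓ⁻_{t,1} < … < ℓ⁻_{t,n_t⁻}. Then for every t: n_t⁺ = n_t⁻, and u_ℓ = ũ_ℓ for all ℓ ∈ {n_t,…,n_{t+1}−1} \ (P_t ∪ N_t). Moreover, the isotonic median matching M̃(u) = ∪_{t=1}^{m−1} {(ℓ⁺_{t,1}, ℓ⁻_{t,1}), …, (ℓ⁺_{t,n̄_t}, ℓ⁻_{t,n̄_t})} (with n̄_t = min{n_t⁺, n_t⁻}) is a valid matching: all its indices are distinct and Z_{ℓ⁺_{t,j}} ≤ Z_{ℓ⁻_{t,j}} for every pair. -/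

import Mathlib

noncomputable section

/-- The median of a finite tuple of reals (given as a list). -/
def med (l : List ℝ) : ℝ :=
  let s := Multiset.sort (l : Multiset ℝ) (· ≤ ·)
  if l.length % 2 = 1 then s.getD (l.length / 2) 0
  else (s.getD (l.length / 2 - 1) 0 + s.getD (l.length / 2) 0) / 2

/-- `Med((u_ℓ)_{ℓ : lo ≤ Z_ℓ ≤ hi})`. -/
def subMed (n : ℕ) (Z u : Fin n → ℝ) (lo hi : ℝ) : ℝ :=
  med (((List.finRange n).filter fun ℓ => decide (lo ≤ Z ℓ ∧ Z ℓ ≤ hi)).map u)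

/-- The isotonic median projection
`ũ_i = max_{j : Z_j ≤ Z_i} min_{k : Z_k ≥ Z_i} Med((u_ℓ)_{ℓ : Z_j ≤ Z_ℓ ≤ Z_k})`. -/
def isoMedProj (n : ℕ) (Z u : Fin n → ℝ) (i : Fin n) : ℝ :=
  (Finset.univ.filter fun j => Z j ≤ Z i).sup' ⟨i, by simp⟩ fun j =>
    (Finset.univ.filter fun k => Z i ≤ Z k).inf' ⟨i, by simp⟩ fun k =>
      subMed n Z u (Z j) (Z k)

/-- The set `P_t` of indices in block `[lo, hi)` with `u_ℓ > r_t`. -/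
def blockPos (n : ℕ) (u : Fin n → ℝ) (lo hi : ℕ) (rt : ℝ) : Finset (Fin n) :=
  Finset.univ.filter fun ℓ : Fin n => lo ≤ (ℓ : ℕ) ∧ (ℓ : ℕ) < hi ∧ rt < u ℓ

/-- The set `N_t` of indices in block `[lo, hi)` with `u_ℓ < r_t`. -/
def blockNeg (n : ℕ) (u : Fin n → ℝ) (lo hi : ℕ) (rt : ℝ) : Finset (Fin n) :=
  Finset.univ.filter fun ℓ : Fin n => lo ≤ (ℓ : ℕ) ∧ (ℓ : ℕ) < hi ∧ u ℓ < rt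

/-- The `j`-th (0-indexed) smallest element of a finite set of indices. -/
def nthIdx (n : ℕ) (hn : 0 < n) (s : Finset (Fin n)) (j : ℕ) : Fin n :=
  (s.sort (· ≤ ·)).getD j ⟨0, hn⟩


/-!
Fix a value `c` and let the *excess* of a set of indices be the number of its entries of `u`
above `c` minus the number below `c`. Because the entries of `u` are distinct, a window
`{ℓ : Z_j ≤ Z_ℓ ≤ Z_k}` whose median is `≤ c` (resp. `≥ c`) has excess `≤ 0` (resp. `≥ 0`), and
the max-min formula for `ũ` supplies such windows around every index. Cutting these windows
along the boundary between `{ũ ≥ c}` (or `{ũ > c}`) and its complement, which `ũ` being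
isotonic makes a threshold in `Z`, shows that the excess is `≥ 0` on every `Z`-prefix of the
upper part and `≤ 0` on every `Z`-suffix of the lower part. A block `{ũ = c}` is both a prefix
of `{ũ ≥ c}` and a suffix of `{ũ ≤ c}`, so its excess vanishes, which is `|P_t| = |N_t|`, and
its excess is `≤ 0` on every `Z`-suffix, which forces the `j`-th element of `P_t` to come no
later in `Z` than the `j`-th element of `N_t`.
-/

open Finset

lemma List.sub_le_countP_of_forall_getElem {α : Type*} {s : List α} (p : α → Bool) {a b : ℕ}
    (hb : b ≤ s.length) (h : ∀ i (hi : i < s.length), a ≤ i → i < b → p s[i]) :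
    b - a ≤ s.countP p := by
  calc b - a = ((s.drop a).take (b - a)).countP p := by
        rw [List.countP_eq_length.mpr]
        · simp; omega
        · intro x hx
          obtain ⟨i, hi, rfl⟩ := List.getElem_of_mem hx
          simp only [List.length_take, List.length_drop] at hi
          simpa using h (a + i) (by omega) (by omega) (by omega)
    _ ≤ s.countP p := ((List.take_sublist _ _).trans (List.drop_sublist _ _)).countP_le

namespace Finset

variable {α : Type*} [LinearOrder α]

lemma card_filter_eq_countP_sort (s : Finset α) (p : α → Prop) [DecidablePred p] :
    #(s.filter p) = (s.sort (· ≤ ·)).countP (fun x => decide (p x)) := by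
  rw [← Multiset.coe_countP, sort_eq, Multiset.countP_eq_card_filter]
  rfl

lemma sort_getD_mem {s : Finset α} {j : ℕ} (hj : j < #s) (d : α) :
    (s.sort (· ≤ ·)).getD j d ∈ s := by
  rw [List.getD_eq_getElem _ _ (by simpa using hj), ← mem_sort (· ≤ ·)]
  exact List.getElem_mem _

lemma eq_of_sort_getD_eq {s : Finset α} {j j' : ℕ} (hj : j < #s) (hj' : j' < #s) {d : α}
    (h : (s.sort (· ≤ ·)).getD j d = (s.sort (· ≤ ·)).getD j' d) : j = j' := by
  rw [List.getD_eq_getElem _ _ (by simpa using hj),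
    List.getD_eq_getElem _ _ (by simpa using hj')] at h
  exact (sort_nodup _ _).getElem_inj_iff.mp h

lemma sort_getD_le_of_card_filter_le {β : Type*} [LinearOrder β] {f : α → β} (hf : Monotone f)
    {P N : Finset α} (hcard : #N ≤ #P) (hsuf : ∀ z, #(P.filter (z ≤ f ·)) ≤ #(N.filter (z ≤ f ·)))
    (d : α) {j : ℕ} (hj : j < #N) :
    f ((P.sort (· ≤ ·)).getD j d) ≤ f ((N.sort (· ≤ ·)).getD j d) := by
  have hsP := sortedLT_sort P
  have hsN := sortedLT_sort N
  rw [List.getD_eq_getElem _ _ (by simp; omega), List.getD_eq_getElem _ _ (by simpa using hj)]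
  set a := (P.sort (· ≤ ·))[j]'(by simp; omega)
  set b := (N.sort (· ≤ ·))[j]'(by simpa using hj)
  by_contra! hba
  -- then the suffix `{f a ≤ f ·}` meets `P` in at least `#P - j` and `N` in fewer than `#N - j`
  have hP : #P - j ≤ #(P.filter (f a ≤ f ·)) := calc
    #P - j ≤ #(P.filter (a ≤ ·)) := by
      rw [card_filter_eq_countP_sort]
      exact List.sub_le_countP_of_forall_getElem _ (by simp) fun i _ hji _ => by
        simpa using hsP.sortedLE.getElem_le_getElem_of_le hji
    _ ≤ #(P.filter (f a ≤ f ·)) := card_le_card <| monotone_filter_right _ fun _ _ h => hf h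
  have hN : j + 1 ≤ #(N.filter (· ≤ b)) := by
    rw [card_filter_eq_countP_sort]
    exact List.sub_le_countP_of_forall_getElem (a := 0) _ (by simpa using hj)
      fun i _ _ hij => by simpa using hsN.sortedLE.getElem_le_getElem_of_le (Nat.le_of_lt_succ hij)
  have hN' : #(N.filter (f a ≤ f ·)) ≤ #(N.filter fun x => ¬ x ≤ b) :=
    card_le_card <| monotone_filter_right _ fun x _ hx hxb => (hf hxb).not_gt (hba.trans_le hx)
  have := card_filter_add_card_filter_not (s := N) (· ≤ b)
  have := hsuf (f a)
  omega

lemma eq_and_eq_of_sort_getD_eq {ι : Type*} {S : ι → Finset α}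
    (hS : ∀ t t' x, x ∈ S t → x ∈ S t' → t = t') {t t' : ι} {j j' : ℕ} (hj : j < #(S t))
    (hj' : j' < #(S t')) {d : α}
    (h : ((S t).sort (· ≤ ·)).getD j d = ((S t').sort (· ≤ ·)).getD j' d) : t = t' ∧ j = j' := by
  obtain rfl : t = t' := hS t t' _ (sort_getD_mem hj d) (h ▸ sort_getD_mem hj' d)
  exact ⟨rfl, eq_of_sort_getD_eq hj hj' h⟩

end Finset

lemma Fin.exists_castSucc_le_lt_succ {α : Type*} [LinearOrder α] :
    ∀ {m : ℕ} {b : Fin (m + 1) → α} {x : α}, b 0 ≤ x → x < b (Fin.last m) →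
      ∃ t : Fin m, b t.castSucc ≤ x ∧ x < b t.succ
  | 0, _, _, h0, hlast => absurd h0 (not_le.mpr hlast)
  | m + 1, b, x, h0, hlast => by
    by_cases hx : x < b (Fin.last m).castSucc
    · obtain ⟨t, ht⟩ := Fin.exists_castSucc_le_lt_succ (b := (b ·.castSucc)) h0 hx
      exact ⟨t.castSucc, ht⟩
    · exact ⟨Fin.last m, not_lt.mp hx, hlast⟩

lemma exists_perm_sortedLT_med_eq {l : List ℝ} (hl : l.Nodup) :
    ∃ s : List ℝ, s.Perm l ∧ s.SortedLT ∧
      med l = (s.getD ((s.length - 1) / 2) 0 + s.getD (s.length / 2) 0) / 2 := by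
  have hperm : (Multiset.sort (l : Multiset ℝ) (· ≤ ·)).Perm l :=
    Multiset.coe_eq_coe.mp (Multiset.sort_eq _ _)
  refine ⟨_, hperm,
    (Multiset.pairwise_sort _ _).sortedLE.sortedLT_of_nodup (hperm.nodup_iff.mpr hl), ?_⟩
  rw [hperm.length_eq, med]
  split_ifs with h
  · rw [show (l.length - 1) / 2 = l.length / 2 by omega]; ring
  · rw [show (l.length - 1) / 2 = l.length / 2 - 1 by omega]

lemma countP_gt_le_countP_lt_of_med_le {l : List ℝ} (hl : l.Nodup) {c : ℝ} (h : med l ≤ c) :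
    l.countP (c < ·) ≤ l.countP (· < c) := by
  obtain ⟨s, hperm, hs, hmed⟩ := exists_perm_sortedLT_med_eq hl
  rw [← hperm.countP_eq, ← hperm.countP_eq]
  rcases Nat.eq_zero_or_pos s.length with h0 | hpos
  · simp [List.length_eq_zero_iff.mp h0]
  set L := s.length
  rw [hmed, List.getD_eq_getElem _ _ (by omega), List.getD_eq_getElem _ _ (by omega)] at h
  have hab : s[(L - 1) / 2] ≤ s[L / 2] := hs.sortedLE.getElem_le_getElem_of_le (by omega)
  have hlt : L / 2 - 0 ≤ s.countP (· < c) :=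
    s.sub_le_countP_of_forall_getElem _ (by omega) fun i _ _ hi => by
      have h1 : s[i] ≤ s[(L - 1) / 2] := hs.sortedLE.getElem_le_getElem_of_le (by omega)
      have h2 : s[i] < s[L / 2] := hs.getElem_lt_getElem_of_lt hi
      simp only [decide_eq_true_eq]; linarith
  have hle : (L - 1) / 2 + 1 - 0 ≤ s.countP (· ≤ c) :=
    s.sub_le_countP_of_forall_getElem _ (by omega) fun i _ _ hi => by
      have h1 : s[i] ≤ s[(L - 1) / 2] := hs.sortedLE.getElem_le_getElem_of_le (by omega)
      simp only [decide_eq_true_eq]; linarith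
  have hsplit := s.length_eq_countP_add_countP (· ≤ c)
  have : s.countP (fun x => ¬ decide (x ≤ c)) = s.countP (c < ·) := by simp
  omega

lemma countP_lt_le_countP_gt_of_le_med {l : List ℝ} (hl : l.Nodup) {c : ℝ} (h : c ≤ med l) :
    l.countP (· < c) ≤ l.countP (c < ·) := by
  obtain ⟨s, hperm, hs, hmed⟩ := exists_perm_sortedLT_med_eq hl
  rw [← hperm.countP_eq, ← hperm.countP_eq]
  rcases Nat.eq_zero_or_pos s.length with h0 | hpos
  · simp [List.length_eq_zero_iff.mp h0]
  set L := s.length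
  rw [hmed, List.getD_eq_getElem _ _ (by omega), List.getD_eq_getElem _ _ (by omega)] at h
  have hab : s[(L - 1) / 2] ≤ s[L / 2] := hs.sortedLE.getElem_le_getElem_of_le (by omega)
  have hgt : L - ((L - 1) / 2 + 1) ≤ s.countP (c < ·) :=
    s.sub_le_countP_of_forall_getElem _ le_rfl fun i _ hi _ => by
      have h1 : s[(L - 1) / 2] < s[i] := hs.getElem_lt_getElem_of_lt hi
      have h2 : s[L / 2] ≤ s[i] := hs.sortedLE.getElem_le_getElem_of_le (by omega)
      simp only [decide_eq_true_eq]; linarith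
  have hge : L - L / 2 ≤ s.countP (c ≤ ·) :=
    s.sub_le_countP_of_forall_getElem _ le_rfl fun i _ hi _ => by
      have h2 : s[L / 2] ≤ s[i] := hs.sortedLE.getElem_le_getElem_of_le hi
      simp only [decide_eq_true_eq]; linarith
  have hsplit := s.length_eq_countP_add_countP (c ≤ ·)
  have : s.countP (fun x => ¬ decide (c ≤ x)) = s.countP (· < c) := by simp
  omega

section Excess

variable {ι : Type*} (u : ι → ℝ) (c : ℝ)

def excess (s : Finset ι) : ℤ := #(s.filter (c < u ·)) - #(s.filter (u · < c))

variable {u c}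

lemma excess_union [DecidableEq ι] {s t : Finset ι} (h : Disjoint s t) :
    excess u c (s ∪ t) = excess u c s + excess u c t := by
  simp only [excess, filter_union, card_union_of_disjoint (disjoint_filter_filter h)]
  push_cast; ring

end Excess

section Window

variable {n : ℕ} (Z u : Fin n → ℝ)

def window (lo hi : ℝ) : Finset (Fin n) := univ.filter fun ℓ => lo ≤ Z ℓ ∧ Z ℓ ≤ hi

variable {Z u}

lemma countP_map_filter_finRange (lo hi : ℝ) (q : ℝ → Prop) [DecidablePred q] :
    (((List.finRange n).filter fun ℓ => decide (lo ≤ Z ℓ ∧ Z ℓ ≤ hi)).map u).countP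
        (fun x => decide (q x)) = #((window Z lo hi).filter (q ∘ u)) := by
  rw [List.countP_map, List.countP_filter, window, filter_filter, card_def, filter_val,
    ← Multiset.countP_eq_card_filter, Finset.val_univ_fin, Multiset.coe_countP]
  exact List.countP_congr fun ℓ _ => by simp [and_comm]

lemma excess_window_nonpos_of_subMed_le (hu : Function.Injective u) {lo hi c : ℝ}
    (h : subMed n Z u lo hi ≤ c) : excess u c (window Z lo hi) ≤ 0 := by
  have := countP_gt_le_countP_lt_of_med_le
    (((List.nodup_finRange n).filter _).map hu) h
  rw [countP_map_filter_finRange, countP_map_filter_finRange] at this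
  simp only [excess, Function.comp_def] at this ⊢
  omega

lemma excess_window_nonneg_of_le_subMed (hu : Function.Injective u) {lo hi c : ℝ}
    (h : c ≤ subMed n Z u lo hi) : 0 ≤ excess u c (window Z lo hi) := by
  have := countP_lt_le_countP_gt_of_le_med
    (((List.nodup_finRange n).filter _).map hu) h
  rw [countP_map_filter_finRange, countP_map_filter_finRange] at this
  simp only [excess, Function.comp_def] at this ⊢
  omega

lemma exists_subMed_le_isoMedProj {i j : Fin n} (hj : Z j ≤ Z i) :
    ∃ k, Z i ≤ Z k ∧ subMed n Z u (Z j) (Z k) ≤ isoMedProj n Z u i := by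
  obtain ⟨k, hk, hmin⟩ := exists_mem_eq_inf' (s := univ.filter fun k => Z i ≤ Z k) ⟨i, by simp⟩
    fun k => subMed n Z u (Z j) (Z k)
  refine ⟨k, (mem_filter.mp hk).2, ?_⟩
  rw [← hmin]
  exact le_sup' (fun j => (univ.filter fun k => Z i ≤ Z k).inf' ⟨i, by simp⟩
    fun k => subMed n Z u (Z j) (Z k)) (by simpa using hj)

lemma exists_forall_isoMedProj_le_subMed (i : Fin n) :
    ∃ j, Z j ≤ Z i ∧ ∀ k, Z i ≤ Z k → isoMedProj n Z u i ≤ subMed n Z u (Z j) (Z k) := by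
  obtain ⟨j, hj, hmax⟩ := exists_mem_eq_sup' (s := univ.filter fun j => Z j ≤ Z i) ⟨i, by simp⟩
    fun j => (univ.filter fun k => Z i ≤ Z k).inf' ⟨i, by simp⟩ fun k => subMed n Z u (Z j) (Z k)
  refine ⟨j, (mem_filter.mp hj).2, fun k hk => ?_⟩
  rw [isoMedProj, hmax]
  exact inf'_le _ (by simpa using hk)

lemma isoMedProj_congr {i i' : Fin n} (h : Z i = Z i') :
    isoMedProj n Z u i = isoMedProj n Z u i' := by
  simp only [isoMedProj, h]

lemma lt_of_isoMedProj_lt (hZ : Monotone Z) (hmono : Monotone (isoMedProj n Z u)) {x y : Fin n}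
    (h : isoMedProj n Z u x < isoMedProj n Z u y) : Z x < Z y := by
  have hxy : x < y := lt_of_not_ge fun hyx => (hmono hyx).not_gt h
  exact (hZ hxy.le).lt_of_ne fun hZxy => h.ne (isoMedProj_congr hZxy)

lemma excess_filter_le_nonneg (hu : Function.Injective u)
    (hiso : ∀ x y, isoMedProj n Z u x < isoMedProj n Z u y → Z x < Z y)
    {U : Finset (Fin n)} {c : ℝ} (hU : ∀ y ∈ U, c ≤ isoMedProj n Z u y)
    (hUc : ∀ x ∉ U, isoMedProj n Z u x ≤ c)
    (hsep : ∀ x ∉ U, ∀ y ∈ U, isoMedProj n Z u x < isoMedProj n Z u y) (w : ℝ) :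
    0 ≤ excess u c (U.filter (Z · ≤ w)) := by
  rcases (U.filter (Z · ≤ w)).eq_empty_or_nonempty with hempty | hne
  · simp [hempty, excess]
  obtain ⟨i, hiU, hi⟩ := U.exists_min_image Z (hne.mono (filter_subset _ _))
  obtain ⟨k, hk, hkmax⟩ := (U.filter (Z · ≤ w)).exists_max_image Z hne
  obtain ⟨hkU, hkw⟩ := mem_filter.mp hk
  obtain ⟨j, hji, hj⟩ := exists_forall_isoMedProj_le_subMed (Z := Z) (u := u) i
  have hjk : 0 ≤ excess u c (window Z (Z j) (Z k)) :=
    excess_window_nonneg_of_le_subMed hu ((hU i hiU).trans (hj k (hi k hkU)))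
  have hmem : ∀ x ∈ U, Z x ≤ w → Z j ≤ Z x ∧ Z x ≤ Z k := fun x hx hxw =>
    ⟨hji.trans (hi x hx), hkmax x (mem_filter.mpr ⟨hx, hxw⟩)⟩
  by_cases hjU : j ∈ U
  · have hwindow : window Z (Z j) (Z k) = U.filter (Z · ≤ w) := by
      ext x
      simp only [window, mem_filter, mem_univ, true_and]
      refine ⟨fun ⟨hjx, hxk⟩ => ?_, fun ⟨hx, hxw⟩ => hmem x hx hxw⟩
      have hx : x ∈ U := by_contra fun hx => (hiso x j (hsep x hx j hjU)).not_ge hjx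
      exact ⟨hx, hxk.trans hkw⟩
    rwa [← hwindow]
  · -- the window overshoots below `U`; the part it overshoots is a window of median `≤ c`
    obtain ⟨i₀, hi₀, hi₀max⟩ := Uᶜ.exists_max_image Z ⟨j, mem_compl.mpr hjU⟩
    have hi₀U : i₀ ∉ U := mem_compl.mp hi₀
    obtain ⟨k₁, hi₀k₁, hk₁⟩ :=
      exists_subMed_le_isoMedProj (u := u) (hi₀max j (mem_compl.mpr hjU))
    have hk₁i : Z k₁ < Z i := lt_of_not_ge fun h =>
      (hsep i₀ hi₀U i hiU).not_ge ((hj k₁ h).trans hk₁)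
    have hjk₁ : excess u c (window Z (Z j) (Z k₁)) ≤ 0 :=
      excess_window_nonpos_of_subMed_le hu (hk₁.trans (hUc i₀ hi₀U))
    have hdisj : Disjoint (window Z (Z j) (Z k₁)) (U.filter (Z · ≤ w)) := by
      refine disjoint_left.mpr fun x hx hxU => ?_
      simp only [window, mem_filter] at hx hxU
      exact (hk₁i.trans_le (hi x hxU.1)).not_ge hx.2.2
    have hsplit : window Z (Z j) (Z k) = window Z (Z j) (Z k₁) ∪ U.filter (Z · ≤ w) := by
      ext x
      simp only [window, mem_union, mem_filter, mem_univ, true_and]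
      constructor
      · rintro ⟨hjx, hxk⟩
        by_cases hx : x ∈ U
        · exact .inr ⟨hx, hxk.trans hkw⟩
        · exact .inl ⟨hjx, (hi₀max x (mem_compl.mpr hx)).trans hi₀k₁⟩
      · rintro (⟨hjx, hxk₁⟩ | ⟨hx, hxw⟩)
        · exact ⟨hjx, hxk₁.trans (hk₁i.le.trans (hi k hkU))⟩
        · exact hmem x hx hxw
    rw [hsplit, excess_union hdisj] at hjk
    linarith

lemma excess_compl_filter_ge_nonpos (hu : Function.Injective u)
    (hiso : ∀ x y, isoMedProj n Z u x < isoMedProj n Z u y → Z x < Z y)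
    {U : Finset (Fin n)} {c : ℝ} (hU : ∀ y ∈ U, c ≤ isoMedProj n Z u y)
    (hUc : ∀ x ∉ U, isoMedProj n Z u x ≤ c)
    (hsep : ∀ x ∉ U, ∀ y ∈ U, isoMedProj n Z u x < isoMedProj n Z u y) (z : ℝ) :
    excess u c (Uᶜ.filter (z ≤ Z ·)) ≤ 0 := by
  rcases (Uᶜ.filter (z ≤ Z ·)).eq_empty_or_nonempty with hempty | hne
  · simp [hempty, excess]
  obtain ⟨j, hj, hjmin⟩ := (Uᶜ.filter (z ≤ Z ·)).exists_min_image Z hne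
  obtain ⟨hjU, hzj⟩ := mem_filter.mp hj
  obtain ⟨i₀, hi₀, hi₀max⟩ := Uᶜ.exists_max_image Z ⟨j, hjU⟩
  obtain ⟨k₁, hi₀k₁, hk₁⟩ := exists_subMed_le_isoMedProj (u := u) (hi₀max j hjU)
  have hjk₁ : excess u c (window Z (Z j) (Z k₁)) ≤ 0 :=
    excess_window_nonpos_of_subMed_le hu (hk₁.trans (hUc i₀ (mem_compl.mp hi₀)))
  have hdisj : Disjoint (Uᶜ.filter (z ≤ Z ·)) (U.filter (Z · ≤ Z k₁)) :=
    disjoint_filter_filter disjoint_compl_left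
  have hsplit : window Z (Z j) (Z k₁) = Uᶜ.filter (z ≤ Z ·) ∪ U.filter (Z · ≤ Z k₁) := by
    ext x
    simp only [window, mem_union, mem_filter, mem_compl, mem_univ, true_and]
    constructor
    · rintro ⟨hjx, hxk₁⟩
      by_cases hx : x ∈ U
      · exact .inr ⟨hx, hxk₁⟩
      · exact .inl ⟨hx, hzj.trans hjx⟩
    · rintro (⟨hx, hzx⟩ | ⟨hx, hxk₁⟩)
      · exact ⟨hjmin x (mem_filter.mpr ⟨mem_compl.mpr hx, hzx⟩),
          (hi₀max x (mem_compl.mpr hx)).trans hi₀k₁⟩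
      · exact ⟨(hiso j x (hsep j (mem_compl.mp hjU) x hx)).le, hxk₁⟩
  have hprefix := excess_filter_le_nonneg hu hiso hU hUc hsep (Z k₁)
  rw [hsplit, excess_union hdisj] at hjk₁
  linarith

lemma excess_level_filter_ge_nonpos (hu : Function.Injective u)
    (hiso : ∀ x y, isoMedProj n Z u x < isoMedProj n Z u y → Z x < Z y) (c z : ℝ) :
    excess u c ((univ.filter (isoMedProj n Z u · = c)).filter (z ≤ Z ·)) ≤ 0 := by
  rcases ((univ.filter (isoMedProj n Z u · = c)).filter (z ≤ Z ·)).eq_empty_or_nonempty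
    with hempty | hne
  · simp [hempty, excess]
  obtain ⟨j, hj, hjmin⟩ := exists_min_image _ Z hne
  simp only [mem_filter, mem_univ, true_and] at hj
  have hsuffix : (univ.filter (isoMedProj n Z u · = c)).filter (z ≤ Z ·)
      = (univ.filter (c < isoMedProj n Z u ·))ᶜ.filter (Z j ≤ Z ·) := by
    ext x
    simp only [mem_filter, mem_compl, mem_univ, true_and, not_lt]
    refine ⟨fun hx => ⟨hx.1.le, hjmin x (by simpa using hx)⟩, fun ⟨hxc, hjx⟩ => ?_⟩
    have hxc : isoMedProj n Z u x = c :=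
      hxc.eq_or_lt.resolve_right fun h => (hiso x j (hj.1 ▸ h)).not_ge hjx
    exact ⟨hxc, hj.2.trans hjx⟩
  rw [hsuffix]
  exact excess_compl_filter_ge_nonpos hu hiso (by simp +contextual [le_of_lt])
    (by simp) (fun x hx y hy => by
      simp only [mem_filter, mem_univ, true_and, not_lt] at hx hy
      exact hx.trans_lt hy) _

lemma excess_level_nonneg (hu : Function.Injective u)
    (hiso : ∀ x y, isoMedProj n Z u x < isoMedProj n Z u y → Z x < Z y) (c : ℝ) :
    0 ≤ excess u c (univ.filter (isoMedProj n Z u · = c)) := by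
  rcases (univ.filter (isoMedProj n Z u · = c)).eq_empty_or_nonempty with hempty | hne
  · simp [hempty, excess]
  obtain ⟨k, hk, hkmax⟩ := exists_max_image _ Z hne
  simp only [mem_filter, mem_univ, true_and] at hk
  have hprefix : univ.filter (isoMedProj n Z u · = c)
      = (univ.filter (c ≤ isoMedProj n Z u ·)).filter (Z · ≤ Z k) := by
    ext x
    simp only [mem_filter, mem_univ, true_and]
    refine ⟨fun hx => ⟨hx.ge, hkmax x (by simpa using hx)⟩, fun ⟨hcx, hxk⟩ => ?_⟩
    exact hcx.eq_or_lt.resolve_right (fun h => (hiso k x (hk ▸ h)).not_ge hxk) |>.symm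
  rw [hprefix]
  exact excess_filter_le_nonneg hu hiso (by simp) (by simp +contextual [le_of_lt])
    (fun x hx y hy => by
      simp only [mem_filter, mem_univ, true_and, not_le] at hx hy
      exact hx.trans_le hy) _

lemma excess_level_eq_zero (hu : Function.Injective u)
    (hiso : ∀ x y, isoMedProj n Z u x < isoMedProj n Z u y → Z x < Z y) (c : ℝ) :
    excess u c (univ.filter (isoMedProj n Z u · = c)) = 0 := by
  obtain ⟨z, hz⟩ := (Set.finite_range Z).bddBelow
  have hle := excess_level_filter_ge_nonpos hu hiso c z
  rw [filter_true_of_mem fun ℓ _ => hz ⟨ℓ, rfl⟩] at hle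
  exact le_antisymm hle (excess_level_nonneg hu hiso c)

end Window

structure IsBlockRep {n m : ℕ} (v : Fin n → ℝ) (b : Fin (m + 1) → ℕ) (r : Fin m → ℝ) : Prop where
  zero : b 0 = 0
  last : b (Fin.last m) = n
  strictMono_b : StrictMono b
  strictMono_r : StrictMono r
  eq : ∀ (t : Fin m) (i : Fin n), b t.castSucc ≤ (i : ℕ) → (i : ℕ) < b t.succ → v i = r t

namespace IsBlockRep

variable {n m : ℕ} {v : Fin n → ℝ} {b : Fin (m + 1) → ℕ} {r : Fin m → ℝ}

lemma eq_iff (h : IsBlockRep v b r) {t : Fin m} {i : Fin n} :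
    v i = r t ↔ b t.castSucc ≤ (i : ℕ) ∧ (i : ℕ) < b t.succ := by
  refine ⟨fun hi => ?_, fun hi => h.eq t i hi.1 hi.2⟩
  obtain ⟨t', ht'⟩ := Fin.exists_castSucc_le_lt_succ (h.zero ▸ Nat.zero_le i) (h.last ▸ i.2)
  obtain rfl : t' = t := h.strictMono_r.injective (hi ▸ h.eq t' i ht'.1 ht'.2).symm
  exact ht'

lemma monotone (h : IsBlockRep v b r) : Monotone v := by
  intro i i' hii'
  obtain ⟨t, ht⟩ := Fin.exists_castSucc_le_lt_succ (h.zero ▸ Nat.zero_le i) (h.last ▸ i.2)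
  obtain ⟨t', ht'⟩ := Fin.exists_castSucc_le_lt_succ (h.zero ▸ Nat.zero_le i') (h.last ▸ i'.2)
  rw [h.eq t i ht.1 ht.2, h.eq t' i' ht'.1 ht'.2]
  refine h.strictMono_r.monotone (not_lt.mp fun htt' => ?_)
  have := h.strictMono_b.monotone (Fin.succ_le_castSucc_iff.mpr htt')
  exact hii'.not_gt (Fin.lt_def.mpr (by omega))

end IsBlockRep

section Blocks

variable {n m : ℕ} {Z u v : Fin n → ℝ} {b : Fin (m + 1) → ℕ} {r : Fin m → ℝ}

lemma IsBlockRep.blockPos_eq (h : IsBlockRep v b r) (u : Fin n → ℝ) (t : Fin m) :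
    blockPos n u (b t.castSucc) (b t.succ) (r t)
      = (univ.filter (v · = r t)).filter (r t < u ·) := by
  ext ℓ
  simp [blockPos, h.eq_iff, and_assoc]

lemma IsBlockRep.blockNeg_eq (h : IsBlockRep v b r) (u : Fin n → ℝ) (t : Fin m) :
    blockNeg n u (b t.castSucc) (b t.succ) (r t)
      = (univ.filter (v · = r t)).filter (u · < r t) := by
  ext ℓ
  simp [blockNeg, h.eq_iff, and_assoc]

lemma card_blockPos_eq_card_blockNeg (hZ : Monotone Z) (hu : Function.Injective u)
    (h : IsBlockRep (isoMedProj n Z u) b r) (t : Fin m) :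
    #(blockPos n u (b t.castSucc) (b t.succ) (r t))
      = #(blockNeg n u (b t.castSucc) (b t.succ) (r t)) := by
  have := excess_level_eq_zero hu (fun _ _ => lt_of_isoMedProj_lt hZ h.monotone) (r t)
  rw [h.blockPos_eq, h.blockNeg_eq]
  simp only [excess] at this
  omega

lemma card_blockPos_filter_le (hZ : Monotone Z) (hu : Function.Injective u)
    (h : IsBlockRep (isoMedProj n Z u) b r) (t : Fin m) (z : ℝ) :
    #((blockPos n u (b t.castSucc) (b t.succ) (r t)).filter (z ≤ Z ·))
      ≤ #((blockNeg n u (b t.castSucc) (b t.succ) (r t)).filter (z ≤ Z ·)) := by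
  have := excess_level_filter_ge_nonpos hu (fun _ _ => lt_of_isoMedProj_lt hZ h.monotone) (r t) z
  rw [h.blockPos_eq, h.blockNeg_eq, filter_comm, filter_comm (p := (u · < r t))]
  simp only [excess] at this
  omega

end Blocks

/-- isotonic median matching is a valid matching: assume
`Z_1 ≤ … ≤ Z_n`, the entries of `u` are all distinct, and `(b, r)` is a block
representation of the isotonic median projection `ũ` of `u`. Writing, for each block
`t`, `P_t` (resp. `N_t`) for the indices in the block with `u_ℓ > r_t` (resp.
`u_ℓ < r_t`), with increasing enumerations `ℓ⁺_{t,·}`, `ℓ⁻_{t,·}`: (1) `|P_t| = |N_t|`;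
(2) `u_ℓ = ũ_ℓ` for block indices outside `P_t ∪ N_t`; (3) the pairs
`(ℓ⁺_{t,j}, ℓ⁻_{t,j})`, `j < min{|P_t|,|N_t|}`, satisfy `Z_{ℓ⁺_{t,j}} ≤ Z_{ℓ⁻_{t,j}}`;
and (4) all matched indices are distinct. -/
theorem isotonic_median_matching_valid (n : ℕ) (hn : 0 < n) (Z u : Fin n → ℝ)
    (hZ : Monotone Z) (hu : Function.Injective u)
    (m : ℕ) (b : Fin (m + 1) → ℕ) (r : Fin m → ℝ)
    (hb0 : b 0 = 0) (hbn : b (Fin.last m) = n) (hbmono : StrictMono b)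
    (hrmono : StrictMono r)
    (hrep : ∀ (t : Fin m) (i : Fin n),
      b t.castSucc ≤ (i : ℕ) → (i : ℕ) < b t.succ → isoMedProj n Z u i = r t) :
    (∀ t : Fin m,
      (blockPos n u (b t.castSucc) (b t.succ) (r t)).card
        = (blockNeg n u (b t.castSucc) (b t.succ) (r t)).card) ∧
    (∀ (t : Fin m) (ℓ : Fin n), b t.castSucc ≤ (ℓ : ℕ) → (ℓ : ℕ) < b t.succ →
      ℓ ∉ blockPos n u (b t.castSucc) (b t.succ) (r t) →
      ℓ ∉ blockNeg n u (b t.castSucc) (b t.succ) (r t) →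
      u ℓ = isoMedProj n Z u ℓ) ∧
    (∀ (t : Fin m) (j : ℕ),
      j < min (blockPos n u (b t.castSucc) (b t.succ) (r t)).card
              (blockNeg n u (b t.castSucc) (b t.succ) (r t)).card →
      Z (nthIdx n hn (blockPos n u (b t.castSucc) (b t.succ) (r t)) j)
        ≤ Z (nthIdx n hn (blockNeg n u (b t.castSucc) (b t.succ) (r t)) j)) ∧
    (∀ (t t' : Fin m) (j j' : ℕ),
      j < min (blockPos n u (b t.castSucc) (b t.succ) (r t)).card
              (blockNeg n u (b t.castSucc) (b t.succ) (r t)).card →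
      j' < min (blockPos n u (b t'.castSucc) (b t'.succ) (r t')).card
              (blockNeg n u (b t'.castSucc) (b t'.succ) (r t')).card →
      (nthIdx n hn (blockPos n u (b t.castSucc) (b t.succ) (r t)) j
          ≠ nthIdx n hn (blockNeg n u (b t'.castSucc) (b t'.succ) (r t')) j') ∧
      (nthIdx n hn (blockPos n u (b t.castSucc) (b t.succ) (r t)) j
          = nthIdx n hn (blockPos n u (b t'.castSucc) (b t'.succ) (r t')) j'
        → t = t' ∧ j = j') ∧
      (nthIdx n hn (blockNeg n u (b t.castSucc) (b t.succ) (r t)) j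
          = nthIdx n hn (blockNeg n u (b t'.castSucc) (b t'.succ) (r t')) j'
        → t = t' ∧ j = j')) := by
  have h : IsBlockRep (isoMedProj n Z u) b r := ⟨hb0, hbn, hbmono, hrmono, hrep⟩
  have hPos : ∀ t ℓ, ℓ ∈ blockPos n u (b t.castSucc) (b t.succ) (r t) ↔
      isoMedProj n Z u ℓ = r t ∧ r t < u ℓ := by simp [h.blockPos_eq]
  have hNeg : ∀ t ℓ, ℓ ∈ blockNeg n u (b t.castSucc) (b t.succ) (r t) ↔
      isoMedProj n Z u ℓ = r t ∧ u ℓ < r t := by simp [h.blockNeg_eq]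
  have hblock {t t' : Fin m} {x : Fin n} (hx : isoMedProj n Z u x = r t)
      (hx' : isoMedProj n Z u x = r t') : t = t' :=
    h.strictMono_r.injective (hx.symm.trans hx')
  refine ⟨card_blockPos_eq_card_blockNeg hZ hu h, fun t ℓ h₁ h₂ hP hN => ?_,
    fun t j hj => ?_, fun t t' j j' hj hj' => ?_⟩
  · simp only [hPos, hNeg, h.eq t ℓ h₁ h₂, true_and, not_lt] at hP hN ⊢
    exact le_antisymm hP hN
  · exact sort_getD_le_of_card_filter_le hZ (card_blockPos_eq_card_blockNeg hZ hu h t).ge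
      (card_blockPos_filter_le hZ hu h t) _ (lt_min_iff.mp hj).2
  rw [lt_min_iff] at hj hj'
  refine ⟨fun hPN => ?_,
    eq_and_eq_of_sort_getD_eq (fun t t' x hx hx' => hblock ((hPos t x).mp hx).1
      ((hPos t' x).mp hx').1) hj.1 hj'.1,
    eq_and_eq_of_sort_getD_eq (fun t t' x hx hx' => hblock ((hNeg t x).mp hx).1
      ((hNeg t' x).mp hx').1) hj.2 hj'.2⟩
  have hx := (hPos t _).mp (sort_getD_mem hj.1 ⟨0, hn⟩)
  have hx' := (hNeg t' _).mp (sort_getD_mem hj'.2 ⟨0, hn⟩)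
  unfold nthIdx at hPN
  rw [hPN] at hx
  obtain rfl := hblock hx.1 hx'.1
  exact lt_asymm hx.2 hx'.2
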